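/- arXiv:1011.4169 — 3 statements merged into one kernel-verified Lean document; each statement's English description precedes it below -/
import Mathlib

section
/- The number of ways to identify the 6m edges of 2m labelled triangles in pairs (with 2 orientations per pair), subject to the connectivity condition that for each k = 2,...,2m the first edge of triangle k is identified with an edge of some triangle labelled less than k, is at least (2m+1)! · (2m+1)! · 2^{2m} / (2 · m!). -/
namespace Stmt2Aux

open Finset

/-- Edges: triangle index × edge index. -/
abbrev E (m : ℕ) := Fin (2*m) × Fin 3

/-- canonical `i`-th element of a finset of edges -/
noncomputable def nth (m : ℕ) (hm : 0 < m) (s : Finset (E m)) (i : ℕ) : E m :=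
  s.toList.getD i (⟨0, by omega⟩, 0)

/-- number of choices at step `s` -/
def NN (m s : ℕ) : ℕ := if s < 2*m-1 then s+3 else 6*m-1-2*s

noncomputable def pivAt (m : ℕ) (hm : 0 < m) (T : Finset (E m)) (s : ℕ) : E m :=
  if s < 2*m-1 then (⟨(s+1) % (2*m), Nat.mod_lt _ (by omega)⟩, 0) else nth m hm T 0

noncomputable def availAt (m : ℕ) (hm : 0 < m) (T : Finset (E m)) (s : ℕ) : Finset (E m) :=
  if s < 2*m-1 then T.filter (fun e => e.1.val ≤ s) else T.erase (pivAt m hm T s)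

/-- remaining (unmatched) edges after `s` steps, given choice sequence `ch` -/
noncomputable def St (m : ℕ) (hm : 0 < m) (ch : ℕ → ℕ) : ℕ → Finset (E m)
  | 0 => Finset.univ
  | s+1 => ((St m hm ch s).erase (pivAt m hm (St m hm ch s) s)).erase
      (nth m hm (availAt m hm (St m hm ch s) s) (ch s))

noncomputable def piv (m : ℕ) (hm : 0 < m) (ch : ℕ → ℕ) (s : ℕ) : E m := pivAt m hm (St m hm ch s) s
noncomputable def avail (m : ℕ) (hm : 0 < m) (ch : ℕ → ℕ) (s : ℕ) : Finset (E m) :=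
  availAt m hm (St m hm ch s) s
noncomputable def prt (m : ℕ) (hm : 0 < m) (ch : ℕ → ℕ) (s : ℕ) : E m :=
  nth m hm (avail m hm ch s) (ch s)

lemma St_succ (m : ℕ) (hm : 0 < m) (ch : ℕ → ℕ) (s : ℕ) :
    St m hm ch (s+1) = ((St m hm ch s).erase (piv m hm ch s)).erase (prt m hm ch s) := rfl

lemma getD_eq {α : Type*} (l : List α) (d : α) {i : ℕ} (h : i < l.length) :
    l.getD i d = l[i] := by
  simp [List.getD_eq_getElem?_getD, List.getElem?_eq_getElem h]

lemma getD_mem {α : Type*} (l : List α) (d : α) {i : ℕ} (h : i < l.length) :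
    l.getD i d ∈ l := by
  rw [getD_eq l d h]; exact List.getElem_mem h

lemma getD_inj {α : Type*} {l : List α} (hl : l.Nodup) {i j : ℕ} {d : α}
    (hi : i < l.length) (hj : j < l.length) (h : l.getD i d = l.getD j d) : i = j := by
  rw [getD_eq l d hi, getD_eq l d hj] at h
  exact (hl.getElem_inj_iff).1 h

lemma card_filter_fst_ge (m t : ℕ) (ht : t ≤ 2*m) :
    ((Finset.univ : Finset (E m)).filter (fun e => t ≤ e.1.val)).card = (2*m - t) * 3 := by
  rcases eq_or_lt_of_le ht with rfl | h
  · rw [Finset.filter_false_of_mem (fun e _ => by push_neg; exact e.1.isLt)]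
    simp
  · have : ((Finset.univ : Finset (E m)).filter (fun e => t ≤ e.1.val)) =
        (Finset.Ici (⟨t, h⟩ : Fin (2*m))) ×ˢ (Finset.univ : Finset (Fin 3)) := by
      ext ⟨a, b⟩
      simp [Finset.mem_filter, Finset.mem_product, Finset.mem_Ici, Fin.le_def]
    rw [this, Finset.card_product, Fin.card_Ici]
    simp


section
variable (m : ℕ) (hm : 0 < m) (ch : ℕ → ℕ)

lemma St_sub_succ (s : ℕ) : St m hm ch (s+1) ⊆ St m hm ch s :=
  (Finset.erase_subset _ _).trans (Finset.erase_subset _ _)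

lemma St_sub {s t : ℕ} (h : s ≤ t) : St m hm ch t ⊆ St m hm ch s := by
  induction t with
  | zero =>
    have : s = 0 := by omega
    subst this; exact subset_rfl
  | succ t ih =>
    rcases Nat.lt_or_ge s (t+1) with h' | h'
    · exact (St_sub_succ m hm ch t).trans (ih (by omega))
    · have : s = t+1 := by omega
      subst this; exact subset_rfl

lemma prt_not_next (s : ℕ) : prt m hm ch s ∉ St m hm ch (s+1) := by
  rw [St_succ]; exact Finset.notMem_erase _ _

lemma piv_not_next (s : ℕ) : piv m hm ch s ∉ St m hm ch (s+1) := by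
  rw [St_succ]
  intro h
  exact Finset.notMem_erase _ _ (Finset.mem_of_mem_erase h)

/-- the step facts, given the state invariant at step `s` -/
lemma facts (s : ℕ) (hs : s < 3*m) (hchs : ch s < NN m s)
    (hcard : (St m hm ch s).card = 6*m - 2*s)
    (hfresh : ∀ e : E m, s+1 ≤ e.1.val → e ∈ St m hm ch s) :
    piv m hm ch s ∈ St m hm ch s ∧
    prt m hm ch s ∈ St m hm ch s ∧
    prt m hm ch s ≠ piv m hm ch s ∧
    (avail m hm ch s).card = NN m s ∧
    (s < 2*m-1 → (prt m hm ch s).1.val ≤ s) := by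
  by_cases hph : s < 2*m-1
  · have hmod : (s+1) % (2*m) = s+1 := Nat.mod_eq_of_lt (by omega)
    have hpiv_val : (piv m hm ch s).1.val = s+1 := by
      simp only [piv, pivAt, if_pos hph, hmod]
    have hpiv_mem : piv m hm ch s ∈ St m hm ch s := hfresh _ (by omega)
    have havail_eq : avail m hm ch s = (St m hm ch s).filter (fun e => e.1.val ≤ s) := by
      simp only [avail, availAt, if_pos hph]
    have hneg : (St m hm ch s).filter (fun e => ¬ e.1.val ≤ s) =
        (Finset.univ : Finset (E m)).filter (fun e => s+1 ≤ e.1.val) := by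
      ext e
      simp only [Finset.mem_filter, Finset.mem_univ, true_and]
      constructor
      · rintro ⟨-, h⟩; omega
      · intro h; exact ⟨hfresh e h, by omega⟩
    have hsplit := Finset.card_filter_add_card_filter_not
      (s := St m hm ch s) (p := fun e : E m => e.1.val ≤ s)
    rw [hneg, hcard, card_filter_fst_ge m (s+1) (by omega)] at hsplit
    have havail_card : (avail m hm ch s).card = s + 3 := by
      rw [havail_eq]; omega
    have hNN : NN m s = s + 3 := by simp [NN, if_pos hph]
    have hlen : ch s < (avail m hm ch s).toList.length := by
      rw [Finset.length_toList, havail_card]; omega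
    have hprt_av : prt m hm ch s ∈ avail m hm ch s := by
      rw [← Finset.mem_toList]
      exact getD_mem _ _ hlen
    rw [havail_eq, Finset.mem_filter] at hprt_av
    refine ⟨hpiv_mem, hprt_av.1, ?_, by omega, fun _ => hprt_av.2⟩
    intro hcontra
    rw [hcontra] at hprt_av
    omega
  · have hpos : 0 < (St m hm ch s).toList.length := by
      rw [Finset.length_toList, hcard]; omega
    have hpiv_eq : piv m hm ch s = nth m hm (St m hm ch s) 0 := by
      simp only [piv, pivAt, if_neg hph]
    have hpiv_mem : piv m hm ch s ∈ St m hm ch s := by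
      rw [hpiv_eq, ← Finset.mem_toList]
      exact getD_mem _ _ hpos
    have havail_eq : avail m hm ch s = (St m hm ch s).erase (piv m hm ch s) := by
      simp only [avail, availAt, if_neg hph, piv]
    have havail_card : (avail m hm ch s).card = 6*m - 2*s - 1 := by
      rw [havail_eq, Finset.card_erase_of_mem hpiv_mem, hcard]
    have hNN : NN m s = 6*m - 1 - 2*s := by simp [NN, if_neg hph]
    have hlen : ch s < (avail m hm ch s).toList.length := by
      rw [Finset.length_toList, havail_card]; omega
    have hprt_av : prt m hm ch s ∈ avail m hm ch s := by
      rw [← Finset.mem_toList]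
      exact getD_mem _ _ hlen
    rw [havail_eq, Finset.mem_erase] at hprt_av
    exact ⟨hpiv_mem, hprt_av.2, hprt_av.1, by omega, fun h => absurd h hph⟩

/-- main state invariant -/
lemma inv (hch : ∀ j, j < 3*m → ch j < NN m j) :
    ∀ s, s ≤ 3*m → (St m hm ch s).card = 6*m - 2*s ∧
      ∀ e : E m, s+1 ≤ e.1.val → e ∈ St m hm ch s := by
  intro s
  induction s with
  | zero =>
    intro _
    constructor
    · simp [St, Finset.card_univ]; ring
    · intro e _; simp [St]
  | succ s ih =>
    intro hs
    obtain ⟨hcard, hfresh⟩ := ih (by omega)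
    have hslt : s < 3*m := by omega
    obtain ⟨hpm, hqm, hne, -, hple⟩ := facts m hm ch s hslt (hch s hslt) hcard hfresh
    constructor
    · rw [St_succ, Finset.card_erase_of_mem (Finset.mem_erase.2 ⟨hne, hqm⟩),
        Finset.card_erase_of_mem hpm, hcard]
      omega
    · intro e he
      by_cases hph : s < 2*m-1
      · have hpiv_val : (piv m hm ch s).1.val = s+1 := by
          simp only [piv, pivAt, if_pos hph, Nat.mod_eq_of_lt (show s+1 < 2*m by omega)]
        rw [St_succ]
        refine Finset.mem_erase.2 ⟨?_, Finset.mem_erase.2 ⟨?_, hfresh e (by omega)⟩⟩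
        · intro hcon; rw [hcon] at he; have := hple hph; omega
        · intro hcon; rw [hcon] at he; omega
      · exfalso
        have := e.1.isLt
        omega

/-- bundled per-step facts -/
lemma facts' (hch : ∀ j, j < 3*m → ch j < NN m j) (s : ℕ) (hs : s < 3*m) :
    piv m hm ch s ∈ St m hm ch s ∧
    prt m hm ch s ∈ St m hm ch s ∧
    prt m hm ch s ≠ piv m hm ch s ∧
    (avail m hm ch s).card = NN m s ∧
    (s < 2*m-1 → (prt m hm ch s).1.val ≤ s) := by
  obtain ⟨h1, h2⟩ := inv m hm ch hch s (by omega)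
  exact facts m hm ch s hs (hch s hs) h1 h2

end

section
variable (m : ℕ) (hm : 0 < m) (ch : ℕ → ℕ)

noncomputable def Gfun : Fin (3*m) × Bool → E m := fun q =>
  if q.2 then prt m hm ch q.1.val else piv m hm ch q.1.val

variable (hch : ∀ j, j < 3*m → ch j < NN m j)
include hch

lemma Gfun_mem (q : Fin (3*m) × Bool) : Gfun m hm ch q ∈ St m hm ch q.1.val := by
  obtain ⟨h1, h2, -, -, -⟩ := facts' m hm ch hch q.1.val q.1.isLt
  rcases q with ⟨s, (_|_)⟩ <;> simpa [Gfun]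

omit hch in
lemma Gfun_not_next (q : Fin (3*m) × Bool) :
    Gfun m hm ch q ∉ St m hm ch (q.1.val + 1) := by
  rcases q with ⟨s, (_|_)⟩
  · simpa [Gfun] using piv_not_next m hm ch s.val
  · simpa [Gfun] using prt_not_next m hm ch s.val

lemma Gfun_inj : Function.Injective (Gfun m hm ch) := by
  have key : ∀ q q' : Fin (3*m) × Bool, q.1.val < q'.1.val →
      Gfun m hm ch q ≠ Gfun m hm ch q' := by
    intro q q' hlt heq
    apply Gfun_not_next m hm ch q
    rw [heq]
    exact St_sub m hm ch (by omega) (Gfun_mem m hm ch hch q')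
  intro q q' heq
  rcases lt_trichotomy q.1.val q'.1.val with h | h | h
  · exact absurd heq (key q q' h)
  · have h1 : q.1 = q'.1 := Fin.ext h
    rcases q with ⟨s, a⟩; rcases q' with ⟨s', b⟩
    simp only at h1; subst h1
    by_cases hab : a = b
    · rw [hab]
    · exfalso
      obtain ⟨-, -, hne, -, -⟩ := facts' m hm ch hch s.val s.isLt
      rcases a <;> rcases b <;> simp_all [Gfun]
  · exact absurd heq.symm (key q' q h)

noncomputable def Geq : (Fin (3*m) × Bool) ≃ E m :=
  Equiv.ofBijective (Gfun m hm ch)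
    ((Fintype.bijective_iff_injective_and_card _).2
      ⟨Gfun_inj m hm ch hch, by simp; ring⟩)

lemma Geq_apply (q : Fin (3*m) × Bool) : Geq m hm ch hch q = Gfun m hm ch q := rfl

lemma Geq_symm_Gfun (q : Fin (3*m) × Bool) :
    (Geq m hm ch hch).symm (Gfun m hm ch q) = q := by
  rw [← Geq_apply m hm ch hch]
  exact Equiv.symm_apply_apply _ q

noncomputable def ff : E m → E m := fun e =>
  Gfun m hm ch (((Geq m hm ch hch).symm e).1, !((Geq m hm ch hch).symm e).2)

noncomputable def gg (bb : ℕ → Bool) : E m → Bool := fun e =>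
  bb ((Geq m hm ch hch).symm e).1.val

lemma ff_Gfun (q : Fin (3*m) × Bool) :
    ff m hm ch hch (Gfun m hm ch q) = Gfun m hm ch (q.1, !q.2) := by
  simp only [ff, Geq_symm_Gfun]

lemma ff_invol (e : E m) : ff m hm ch hch (ff m hm ch hch e) = e := by
  have he : e = Gfun m hm ch ((Geq m hm ch hch).symm e) := by
    rw [← Geq_apply m hm ch hch, Equiv.apply_symm_apply]
  conv_lhs => rw [he]
  rw [ff_Gfun, ff_Gfun]
  simp only [Bool.not_not, Prod.mk.eta]
  rw [← Geq_apply m hm ch hch]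
  exact Equiv.apply_symm_apply _ e

lemma ff_ne (e : E m) : ff m hm ch hch e ≠ e := by
  intro h
  have he : e = Gfun m hm ch ((Geq m hm ch hch).symm e) := by
    rw [← Geq_apply m hm ch hch, Equiv.apply_symm_apply]
  rw [ff] at h
  have h2 := Gfun_inj m hm ch hch (h.trans he)
  have h3 := congrArg Prod.snd h2
  simp at h3

lemma gg_ff (bb : ℕ → Bool) (e : E m) :
    gg m hm ch hch bb (ff m hm ch hch e) = gg m hm ch hch bb e := by
  have he : e = Gfun m hm ch ((Geq m hm ch hch).symm e) := by
    rw [← Geq_apply m hm ch hch, Equiv.apply_symm_apply]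
  conv_lhs => rw [he, ff_Gfun]
  simp only [gg, Geq_symm_Gfun]

omit hch in
lemma piv_eq_pair (k : Fin (2*m)) (hk : 1 ≤ k.val) :
    piv m hm ch (k.val - 1) = (k, 0) := by
  have hph : k.val - 1 < 2*m - 1 := by have := k.isLt; omega
  simp only [piv, pivAt, if_pos hph]
  have hmd : (k.val - 1 + 1) % (2*m) = k.val := by
    rw [show k.val - 1 + 1 = k.val by omega]
    exact Nat.mod_eq_of_lt k.isLt
  exact Prod.ext (Fin.ext hmd) rfl

omit hch in
lemma Gfun_piv (s : ℕ) (hs : s < 3*m) :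
    Gfun m hm ch (⟨s, hs⟩, false) = piv m hm ch s := rfl

lemma ff_conn (k : Fin (2*m)) (hk : 1 ≤ k.val) :
    ((ff m hm ch hch (k, 0)).1 : ℕ) < k.val := by
  have hs3 : k.val - 1 < 3*m := by have := k.isLt; omega
  have hph : k.val - 1 < 2*m - 1 := by have := k.isLt; omega
  have h0 : ((k, (0 : Fin 3)) : E m) = Gfun m hm ch (⟨k.val - 1, hs3⟩, false) := by
    rw [Gfun_piv, piv_eq_pair m hm ch k hk]
  rw [h0, ff_Gfun]
  obtain ⟨-, -, -, -, hple⟩ := facts' m hm ch hch (k.val - 1) hs3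
  have h1 : Gfun m hm ch ((⟨k.val - 1, hs3⟩ : Fin (3*m)), !false) = prt m hm ch (k.val - 1) := rfl
  rw [h1]
  have := hple hph
  omega

lemma ff_piv (s : ℕ) (hs : s < 3*m) :
    ff m hm ch hch (piv m hm ch s) = prt m hm ch s := by
  rw [← Gfun_piv m hm ch s hs, ff_Gfun]
  rfl

lemma gg_piv (bb : ℕ → Bool) (s : ℕ) (hs : s < 3*m) :
    gg m hm ch hch bb (piv m hm ch s) = bb s := by
  rw [← Gfun_piv m hm ch s hs, gg, Geq_symm_Gfun]

end

lemma St_congr (m : ℕ) (hm : 0 < m) (ch ch' : ℕ → ℕ) :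
    ∀ s : ℕ, (∀ j, j < s → ch j = ch' j) → St m hm ch s = St m hm ch' s := by
  intro s
  induction s with
  | zero => intro _; rfl
  | succ s ih =>
    intro h
    have hS : St m hm ch s = St m hm ch' s := ih (fun j hj => h j (by omega))
    show ((St m hm ch s).erase _).erase _ = ((St m hm ch' s).erase _).erase _
    rw [hS, h s (by omega)]



lemma avail_congr (m : ℕ) (hm : 0 < m) (ch ch' : ℕ → ℕ) (s : ℕ)
    (h : St m hm ch s = St m hm ch' s) : avail m hm ch s = avail m hm ch' s := by
  simp only [avail, availAt, pivAt, h]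

lemma ch_inj (m : ℕ) (hm : 0 < m) (ch ch' : ℕ → ℕ)
    (hch : ∀ j, j < 3*m → ch j < NN m j) (hch' : ∀ j, j < 3*m → ch' j < NN m j)
    (hf : ff m hm ch hch = ff m hm ch' hch') :
    ∀ s, s < 3*m → ch s = ch' s := by
  intro s
  induction s using Nat.strong_induction_on with
  | _ s ih =>
    intro hs
    have hSt : St m hm ch s = St m hm ch' s :=
      St_congr m hm ch ch' s (fun j hj => ih j hj (by omega))
    have hpiv : piv m hm ch s = piv m hm ch' s := by
      simp only [piv, hSt]
    have hprt : prt m hm ch s = prt m hm ch' s := by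
      rw [← ff_piv m hm ch hch s hs, ← ff_piv m hm ch' hch' s hs, hf, hpiv]
    have hav : avail m hm ch s = avail m hm ch' s := avail_congr m hm ch ch' s hSt
    obtain ⟨-, -, -, hcardav, -⟩ := facts' m hm ch hch s hs
    have hlen : ch s < (avail m hm ch s).toList.length := by
      rw [Finset.length_toList, hcardav]; exact hch s hs
    have hlen' : ch' s < (avail m hm ch s).toList.length := by
      rw [Finset.length_toList, hcardav]; exact hch' s hs
    apply getD_inj (Finset.nodup_toList _) hlen hlen'
    have := hprt
    simp only [prt, nth, hav] at this ⊢
    exact this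

lemma bb_inj (m : ℕ) (hm : 0 < m) (ch ch' : ℕ → ℕ) (bb bb' : ℕ → Bool)
    (hch : ∀ j, j < 3*m → ch j < NN m j) (hch' : ∀ j, j < 3*m → ch' j < NN m j)
    (hf : ff m hm ch hch = ff m hm ch' hch')
    (hg : gg m hm ch hch bb = gg m hm ch' hch' bb') :
    ∀ s, s < 3*m → bb s = bb' s := by
  intro s hs
  have hceq := ch_inj m hm ch ch' hch hch' hf
  have hSt : St m hm ch s = St m hm ch' s :=
    St_congr m hm ch ch' s (fun j hj => hceq j (by omega))
  have hpiv : piv m hm ch s = piv m hm ch' s := by simp only [piv, hSt]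
  rw [← gg_piv m hm ch hch bb s hs, hg, hpiv, gg_piv m hm ch' hch' bb' s hs]

/-! ### Arithmetic -/

lemma two_mul_prodA (n : ℕ) :
    2 * ∏ k ∈ Finset.range n, (k+3) = (n+2).factorial := by
  induction n with
  | zero => rfl
  | succ n ih =>
    rw [Finset.prod_range_succ]
    calc 2 * ((∏ k ∈ Finset.range n, (k+3)) * (n+3))
        = (2 * ∏ k ∈ Finset.range n, (k+3)) * (n+3) := by ring
      _ = (n+2).factorial * (n+3) := by rw [ih]
      _ = (n+1+2).factorial := by
          have hf : ((n+2)+1).factorial = ((n+2)+1) * (n+2).factorial := Nat.factorial_succ _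
          rw [show n+1+2 = (n+2)+1 by ring, hf]; ring

lemma oddprod (n : ℕ) :
    (∏ i ∈ Finset.range n, (2*i+1)) * (2^n * n.factorial) = (2*n).factorial := by
  induction n with
  | zero => rfl
  | succ n ih =>
    rw [Finset.prod_range_succ]
    calc ((∏ i ∈ Finset.range n, (2*i+1)) * (2*n+1)) * (2^(n+1) * (n+1).factorial)
        = ((∏ i ∈ Finset.range n, (2*i+1)) * (2^n * n.factorial)) * ((2*n+1)*(2*(n+1))) := by
          rw [pow_succ, Nat.factorial_succ]; ring
      _ = (2*n).factorial * ((2*n+1)*(2*n+2)) := by rw [ih]; ring_nf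
      _ = (2*(n+1)).factorial := by
          have hf1 : ((2*n+1)+1).factorial = ((2*n+1)+1) * (2*n+1).factorial :=
            Nat.factorial_succ _
          have hf2 : ((2*n)+1).factorial = ((2*n)+1) * (2*n).factorial :=
            Nat.factorial_succ _
          rw [show 2*(n+1) = (2*n+1)+1 by ring, hf1, hf2]
          ring

lemma prod_NN (m : ℕ) (hm : 1 ≤ m) :
    (∏ s ∈ Finset.range (3*m), NN m s) * (2^(m+1) * m.factorial) =
      (2*m+1).factorial * (2*m+1).factorial := by
  have hsplit : 3*m = (2*m-1) + (m+1) := by omega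
  rw [hsplit, Finset.prod_range_add]
  have hA : ∏ k ∈ Finset.range (2*m-1), NN m k = ∏ k ∈ Finset.range (2*m-1), (k+3) :=
    Finset.prod_congr rfl (fun k hk => by
      rw [Finset.mem_range] at hk
      simp [NN, if_pos hk])
  have hB : ∏ i ∈ Finset.range (m+1), NN m (2*m-1+i) =
      ∏ i ∈ Finset.range (m+1), (2*m+1-2*i) :=
    Finset.prod_congr rfl (fun i hi => by
      rw [Finset.mem_range] at hi
      have hnot : ¬ (2*m-1+i < 2*m-1) := by omega
      simp only [NN, if_neg hnot]
      omega)
  have hB2 : ∏ i ∈ Finset.range (m+1), (2*m+1-2*i) =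
      ∏ i ∈ Finset.range (m+1), (2*i+1) := by
    rw [← Finset.prod_range_reflect (fun i => 2*i+1) (m+1)]
    exact Finset.prod_congr rfl (fun i hi => by
      rw [Finset.mem_range] at hi
      omega)
  rw [hA, hB, hB2, Finset.prod_range_succ]
  calc (∏ k ∈ Finset.range (2*m-1), (k+3)) *
        ((∏ i ∈ Finset.range m, (2*i+1)) * (2*m+1)) * (2^(m+1) * m.factorial)
      = (2 * ∏ k ∈ Finset.range (2*m-1), (k+3)) *
        ((∏ i ∈ Finset.range m, (2*i+1)) * (2^m * m.factorial)) * (2*m+1) := by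
        rw [pow_succ]; ring
    _ = (2*m-1+2).factorial * ((2*m).factorial * (2*m+1)) := by
        rw [two_mul_prodA, oddprod]; ring
    _ = (2*m+1).factorial * (2*m+1).factorial := by
        have hf : ((2*m)+1).factorial = ((2*m)+1) * (2*m).factorial := Nat.factorial_succ _
        rw [show 2*m-1+2 = (2*m)+1 by omega, hf]
        ring

end Stmt2Aux


/-- The number of ways to identify the 6m edges of 2m labelled triangles in pairs
(fixed-point-free involution) with 2 orientations per pair (a Bool labelling
constant on pairs), subject to the connectivity condition that for each
k = 2,…,2m the first edge of triangle k is identified with an edge of a triangle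
of smaller label, is at least (2m+1)! · (2m+1)! · 2^(2m) / (2 · m!). -/
theorem stmt2 (m : ℕ) (hm : 1 ≤ m) :
    ((2 * m + 1).factorial * (2 * m + 1).factorial * 2 ^ (2 * m) : ℝ) /
        (2 * m.factorial) ≤
      (Nat.card {fg : (Fin (2 * m) × Fin 3 → Fin (2 * m) × Fin 3) ×
            (Fin (2 * m) × Fin 3 → Bool) //
          (∀ e, fg.1 (fg.1 e) = e) ∧ (∀ e, fg.1 e ≠ e) ∧
          (∀ e, fg.2 (fg.1 e) = fg.2 e) ∧
          (∀ k : Fin (2 * m), 1 ≤ k.val → ((fg.1 (k, 0)).1 : ℕ) < k.val)} : ℝ) := by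
  classical
  have hm0 : 0 < m := hm
  set S := {fg : (Fin (2 * m) × Fin 3 → Fin (2 * m) × Fin 3) ×
            (Fin (2 * m) × Fin 3 → Bool) //
          (∀ e, fg.1 (fg.1 e) = e) ∧ (∀ e, fg.1 e ≠ e) ∧
          (∀ e, fg.2 (fg.1 e) = fg.2 e) ∧
          (∀ k : Fin (2 * m), 1 ≤ k.val → ((fg.1 (k, 0)).1 : ℕ) < k.val)} with hS
  let P := ∀ s : Fin (3*m), Fin (Stmt2Aux.NN m s.val) × Bool
  let ch : P → ℕ → ℕ := fun p s => if h : s < 3*m then ((p ⟨s, h⟩).1 : ℕ) else 0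
  let bb : P → ℕ → Bool := fun p s => if h : s < 3*m then (p ⟨s, h⟩).2 else false
  have hch : ∀ p : P, ∀ j, j < 3*m → ch p j < Stmt2Aux.NN m j := by
    intro p j hj
    simp only [ch, dif_pos hj]
    exact (p ⟨j, hj⟩).1.isLt
  let F : P → S := fun p =>
    ⟨(Stmt2Aux.ff m hm0 (ch p) (hch p), Stmt2Aux.gg m hm0 (ch p) (hch p) (bb p)),
      Stmt2Aux.ff_invol m hm0 (ch p) (hch p),
      Stmt2Aux.ff_ne m hm0 (ch p) (hch p),
      Stmt2Aux.gg_ff m hm0 (ch p) (hch p) (bb p),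
      fun k hk => Stmt2Aux.ff_conn m hm0 (ch p) (hch p) k hk⟩
  have hFinj : Function.Injective F := by
    intro p p' h
    have h1 : Stmt2Aux.ff m hm0 (ch p) (hch p) = Stmt2Aux.ff m hm0 (ch p') (hch p') :=
      congrArg (fun x => x.val.1) h
    have h2 : Stmt2Aux.gg m hm0 (ch p) (hch p) (bb p) =
        Stmt2Aux.gg m hm0 (ch p') (hch p') (bb p') :=
      congrArg (fun x => x.val.2) h
    have hcheq := Stmt2Aux.ch_inj m hm0 (ch p) (ch p') (hch p) (hch p') h1
    have hbbeq := Stmt2Aux.bb_inj m hm0 (ch p) (ch p') (bb p) (bb p') (hch p) (hch p') h1 h2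
    funext s
    have hs := s.isLt
    have e1 : ((p s).1 : ℕ) = ch p s.val := by
      simp only [ch, dif_pos hs, Fin.eta]
    have e1' : ((p' s).1 : ℕ) = ch p' s.val := by
      simp only [ch, dif_pos hs, Fin.eta]
    have e2 : (p s).2 = bb p s.val := by
      simp only [bb, dif_pos hs, Fin.eta]
    have e2' : (p' s).2 = bb p' s.val := by
      simp only [bb, dif_pos hs, Fin.eta]
    have : ((p s).1 : ℕ) = ((p' s).1 : ℕ) := by
      rw [e1, e1', hcheq s.val hs]
    exact Prod.ext (Fin.ext this) (by rw [e2, e2', hbbeq s.val hs])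
  have hcard : Nat.card P ≤ Nat.card S := Nat.card_le_card_of_injective F hFinj
  have hcardP : Nat.card P = (∏ s ∈ Finset.range (3*m), Stmt2Aux.NN m s) * 2^(3*m) := by
    rw [Nat.card_eq_fintype_card, Fintype.card_pi]
    have : ∀ s : Fin (3*m), Fintype.card (Fin (Stmt2Aux.NN m s.val) × Bool)
        = Stmt2Aux.NN m s.val * 2 := by
      intro s; simp
    rw [Finset.prod_congr rfl (fun s _ => this s), Fin.prod_univ_eq_prod_range
      (fun s => Stmt2Aux.NN m s * 2) (3*m)]
    rw [Finset.prod_mul_distrib, Finset.prod_const]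
    simp
  have hp2 : (2:ℕ)^(3*m) * 2 = 2^(m+1) * 2^(2*m) := by
    rw [← pow_succ, ← pow_add]
    congr 1
    omega
  have key : (2*m+1).factorial * (2*m+1).factorial * 2^(2*m) =
      ((∏ s ∈ Finset.range (3*m), Stmt2Aux.NN m s) * 2^(3*m)) * (2 * m.factorial) := by
    calc (2*m+1).factorial * (2*m+1).factorial * 2^(2*m)
        = ((∏ s ∈ Finset.range (3*m), Stmt2Aux.NN m s) * (2^(m+1) * m.factorial)) * 2^(2*m) := by
          rw [Stmt2Aux.prod_NN m hm]
      _ = (∏ s ∈ Finset.range (3*m), Stmt2Aux.NN m s) * (2^(m+1) * 2^(2*m)) * m.factorial := by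
          ring
      _ = ((∏ s ∈ Finset.range (3*m), Stmt2Aux.NN m s) * 2^(3*m)) * (2 * m.factorial) := by
          rw [← hp2]; ring
  have hnat : (2*m+1).factorial * (2*m+1).factorial * 2^(2*m) ≤ Nat.card S * (2 * m.factorial) := by
    rw [key]
    exact Nat.mul_le_mul_right _ (hcardP ▸ hcard)
  rw [div_le_iff₀ (by positivity)]
  exact_mod_cast hnat
end

section
/- For every m ≥ 1, the quantity (2m+1)!·(2m+1)!·2^{2m} / (2·m!·(2m)!·6^{2m}) is bounded below by (m+1)^{m+1}·(1/9)^m, and hence grows at rate exp(Ω(m log m)). -/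
/-!
The quantity equals `(2m+1)!² / (2·m!·(2m)!) · (1/9)^m`, since `2^(2m) / 6^(2m) = 9^(-m)`.
As `(2m+1)! / m! = (m+1)(m+2)⋯(2m+1)` has `m + 1` factors `≥ m + 1` and
`2·(2m)! ≤ (2m+1)!`, we get `(m+1)^(m+1) ≤ (2m+1)!² / (2·m!·(2m)!)`.
For the growth rate, `(m+1)^(m+1)/9^m ≥ (m/9)^m` and `m/9 ≥ √m` once `m ≥ 81`,
so the quantity is at least `√m^m = exp(½ m log m)`.
-/

open Nat Real

lemma two_mul_factorial_le_factorial_succ {n : ℕ} (hn : 1 ≤ n) : 2 * n ! ≤ (n + 1)! := by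
  rw [factorial_succ]
  exact Nat.mul_le_mul_right _ (by omega)

lemma two_mul_pow_mul_factorial_mul_factorial_le {m : ℕ} (hm : 1 ≤ m) :
    2 * (m + 1) ^ (m + 1) * m ! * (2 * m)! ≤ (2 * m + 1)! * (2 * m + 1)! := by
  have h₁ : m ! * (m + 1) ^ (m + 1) ≤ (2 * m + 1)! := by
    simpa only [show m + (m + 1) = 2 * m + 1 by ring] using
      factorial_mul_pow_le_factorial (m := m) (n := m + 1)
  have h₂ : 2 * (2 * m)! ≤ (2 * m + 1)! := two_mul_factorial_le_factorial_succ (by omega)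
  calc 2 * (m + 1) ^ (m + 1) * m ! * (2 * m)! = (m ! * (m + 1) ^ (m + 1)) * (2 * (2 * m)!) := by
        ring
    _ ≤ (2 * m + 1)! * (2 * m + 1)! := Nat.mul_le_mul h₁ h₂

lemma two_pow_two_mul_div_six_pow_two_mul (m : ℕ) :
    (2 : ℝ) ^ (2 * m) / 6 ^ (2 * m) = (1 / 9) ^ m := by
  rw [← div_pow, pow_mul]
  norm_num

lemma pow_succ_mul_inv_nine_pow_le {m : ℕ} (hm : 1 ≤ m) :
    (m + 1 : ℝ) ^ (m + 1) * (1 / 9) ^ m ≤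
      ((2 * m + 1)! * (2 * m + 1)! * 2 ^ (2 * m) : ℝ) / (2 * m ! * (2 * m)! * 6 ^ (2 * m)) := by
  have key : (2 * (m + 1) ^ (m + 1) * m ! * (2 * m)! : ℝ) ≤ (2 * m + 1)! * (2 * m + 1)! := by
    exact_mod_cast two_mul_pow_mul_factorial_mul_factorial_le hm
  have hden : (0 : ℝ) < 2 * m ! * (2 * m)! := by positivity
  calc (m + 1 : ℝ) ^ (m + 1) * (1 / 9) ^ m
      ≤ ((2 * m + 1)! * (2 * m + 1)! : ℝ) / (2 * m ! * (2 * m)!) * (1 / 9) ^ m := by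
        gcongr
        rw [le_div_iff₀ hden]
        linarith
    _ = ((2 * m + 1)! * (2 * m + 1)! * 2 ^ (2 * m) : ℝ) / (2 * m ! * (2 * m)! * 6 ^ (2 * m)) := by
        rw [← two_pow_two_mul_div_six_pow_two_mul]
        field_simp

lemma sqrt_le_div_nine {x : ℝ} (hx : 81 ≤ x) : √x ≤ x / 9 := by
  have h9 : 9 ≤ √x := Real.le_sqrt_of_sq_le (by linarith)
  nlinarith [Real.mul_self_sqrt (show 0 ≤ x by linarith)]

lemma exp_half_mul_log_le {m : ℕ} (hm : 81 ≤ m) :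
    Real.exp (1 / 2 * m * Real.log m) ≤ (m + 1 : ℝ) ^ (m + 1) * (1 / 9) ^ m := by
  have hm' : (81 : ℝ) ≤ m := by exact_mod_cast hm
  calc Real.exp (1 / 2 * m * Real.log m) = Real.exp (m * Real.log √(m : ℝ)) := by
        rw [log_sqrt (by positivity)]; ring_nf
    _ = √(m : ℝ) ^ m := by rw [exp_nat_mul, exp_log (by positivity)]
    _ ≤ ((m : ℝ) / 9) ^ m := by gcongr; exact sqrt_le_div_nine hm'
    _ ≤ (m + 1 : ℝ) ^ m * (1 / 9) ^ m := by rw [← mul_pow]; gcongr; linarith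
    _ ≤ (m + 1 : ℝ) ^ (m + 1) * (1 / 9) ^ m := by gcongr <;> linarith

/-- For every m ≥ 1, (2m+1)!·(2m+1)!·2^(2m) / (2·m!·(2m)!·6^(2m)) is bounded
below by (m+1)^(m+1)·(1/9)^m, and hence grows at rate exp(Ω(m log m)). -/
theorem stmt3 :
    (∀ m : ℕ, 1 ≤ m →
      (m + 1 : ℝ) ^ (m + 1) * (1 / 9) ^ m ≤
        ((2 * m + 1).factorial * (2 * m + 1).factorial * 2 ^ (2 * m) : ℝ) /
          (2 * m.factorial * (2 * m).factorial * 6 ^ (2 * m))) ∧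
    (∃ c : ℝ, 0 < c ∧ ∃ N : ℕ, ∀ m : ℕ, N ≤ m →
      Real.exp (c * m * Real.log m) ≤
        ((2 * m + 1).factorial * (2 * m + 1).factorial * 2 ^ (2 * m) : ℝ) /
          (2 * m.factorial * (2 * m).factorial * 6 ^ (2 * m))) :=
  ⟨fun _ hm => pow_succ_mul_inv_nine_pow_le hm,
    ⟨1 / 2, by norm_num, 81, fun _ hm =>
      (exp_half_mul_log_le hm).trans (pow_succ_mul_inv_nine_pow_le (by omega))⟩⟩
end

section
/- If every one-vertex 3-sphere triangulation with n ≥ 3 tetrahedra can be connected, via a path in the restricted Pachner graph staying within levels n to n+2, to a triangulation admitting a 3-2 move, and level sets of the restricted Pachner graph have size exp(O(n log n)), then any one-vertex 3-sphere triangulation of size n can be transformed into the 2-tetrahedron canonical form using exp(O(n log n)) Pachner moves. -/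
/-!
Descend one level at a time: by hypothesis a node of level `k ≥ 3` reaches level `k - 1`
through nodes of level `≤ k + 2`, and a node of level 2 reaches `c` through levels `≤ 4`.
Pruning cycles from each piece leaves a walk without repeated nodes, so its length is at most
the number of nodes of level `≤ n + 2`, which is `∑_{j ≤ n+2} exp(O(j log j))`, hence at most
`(n + 3) exp(O(n log n))`.
Concatenating the `n - 1` pieces costs `n (n + 3) exp(O(n log n)) = exp(O(n log n))` moves.
-/

open Finset Real

namespace List

variable {α : Type*} {r : α → α → Prop}

theorem IsChain.exists_nodup_subset : ∀ {l : List α}, IsChain r l →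
    ∃ l', IsChain r l' ∧ l'.Nodup ∧ l' ⊆ l ∧ l'.head? = l.head? ∧ l'.getLast? = l.getLast?
  | [], _ => ⟨[], .nil, nodup_nil, Subset.refl _, rfl, rfl⟩
  | a :: t, h => by
    obtain ⟨t', ht', hnd, hsub, hhead, hlast⟩ := (List.isChain_cons.1 h).2.exists_nodup_subset
    by_cases ha : a ∈ t'
    · -- cut the cycle from `a` back to its later occurrence in `t'`
      obtain ⟨p, q, rfl⟩ := append_of_mem ha
      refine ⟨a :: q, ht'.right_of_append, hnd.sublist (sublist_append_right _ _), ?_, rfl, ?_⟩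
      · exact cons_subset.2 ⟨mem_cons_self, fun z hz => mem_cons_of_mem _ (hsub (by simp [hz]))⟩
      · simp [getLast?_cons, ← hlast]
    · exact ⟨a :: t', List.isChain_cons.2 ⟨hhead ▸ (List.isChain_cons.1 h).1, ht'⟩,
        nodup_cons.2 ⟨ha, hnd⟩, cons_subset_cons _ hsub, rfl, by simp [getLast?_cons, hlast]⟩

end List

section Walks

open List

variable {α : Type*} {r : α → α → Prop}

-- The walk visits `x :: l`, so `l.length` is its number of steps.
def IsWalk (r : α → α → Prop) (x : α) (l : List α) (y : α) : Prop :=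
  IsChain r (x :: l) ∧ l.getLast? = some y

theorem isWalk_iff {x y : α} {l : List α} :
    IsWalk r x l y ↔ ∃ h : l ≠ [], IsChain r (x :: l) ∧ l.getLast h = y := by
  constructor
  · rintro ⟨hch, hlast⟩
    have hne : l ≠ [] := by rintro rfl; simp at hlast
    exact ⟨hne, hch, by simpa [getLast?_eq_some_getLast hne] using hlast⟩
  · rintro ⟨hne, hch, rfl⟩
    exact ⟨hch, getLast?_eq_some_getLast hne⟩

theorem IsWalk.append {x y z : α} {l₁ l₂ : List α} (h₁ : IsWalk r x l₁ y)
    (h₂ : IsWalk r y l₂ z) : IsWalk r x (l₁ ++ l₂) z := by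
  refine ⟨?_, by simp [getLast?_append, h₂.2]⟩
  rw [← cons_append]
  refine h₁.1.append (isChain_cons.1 h₂.1).2 fun a ha b hb => ?_
  rw [getLast?_cons, h₁.2] at ha
  cases Option.some_injective _ ha
  exact (isChain_cons.1 h₂.1).1 b hb

theorem IsWalk.exists_length_le_ncard {x y : α} {l : List α} (h : IsWalk r x l y) {s : Set α}
    (hs : s.Finite) (hl : ∀ z ∈ l, z ∈ s) : ∃ l', IsWalk r x l' y ∧ l'.length ≤ s.ncard := by
  classical
  obtain ⟨hxl, hl'⟩ := isChain_cons.1 h.1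
  obtain ⟨l', hch, hnd, hsub, hhead, hlast⟩ := hl'.exists_nodup_subset
  refine ⟨l', ⟨isChain_cons.2 ⟨hhead ▸ hxl, hch⟩, hlast ▸ h.2⟩, ?_⟩
  rw [← toFinset_card_of_nodup hnd, ← Set.ncard_coe_finset]
  exact Set.ncard_le_ncard (fun z hz => hl z (hsub (mem_toFinset.1 hz))) hs

end Walks

section Levels

variable {T : Type*} (level : T → ℕ)

theorem finite_setOf_level_le (hfin : ∀ k, Finite {x : T // level x = k}) (k : ℕ) :
    {x | level x ≤ k}.Finite :=
  (Set.finite_Iic k).preimage' fun j _ => @Set.toFinite _ _ (hfin j)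

theorem ncard_setOf_level_le_le_sum (k : ℕ) :
    {x | level x ≤ k}.ncard ≤ ∑ j ∈ range (k + 1), Nat.card {x : T // level x = j} := by
  have hunion : {x | level x ≤ k} = ⋃ j ∈ range (k + 1), {x | level x = j} := by
    ext x; simp
  rw [hunion]
  exact (range (k + 1)).set_ncard_biUnion_le _

theorem exists_isWalk_length_le {adj : T → T → Prop} {c : T}
    (hfin : ∀ k, Finite {x : T // level x = k})
    (hsimp : ∀ x, 3 ≤ level x → ∃ l y, IsWalk adj x l y ∧
      (∀ z ∈ l, level z ≤ level x + 2) ∧ level y = level x - 1)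
    (hbase : ∀ y, level y = 2 → ∃ l, IsWalk adj y l c ∧ ∀ z ∈ l, level z ≤ 4)
    (n : ℕ) (hn : 2 ≤ n) (x : T) (hx : level x = n) :
    ∃ l, IsWalk adj x l c ∧ l.length ≤ n * {z | level z ≤ n + 2}.ncard := by
  induction n, hn using Nat.le_induction generalizing x with
  | base =>
    obtain ⟨l, hwalk, hlev⟩ := hbase x hx
    obtain ⟨l', hwalk', hlen⟩ :=
      hwalk.exists_length_le_ncard (finite_setOf_level_le level hfin 4) hlev
    exact ⟨l', hwalk', hlen.trans (Nat.le_mul_of_pos_left _ two_pos)⟩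
  | succ n hn ih =>
    obtain ⟨l₁, y, hwalk₁, hlev₁, hy⟩ := hsimp x (by omega)
    have hfinite := finite_setOf_level_le level hfin (n + 3)
    obtain ⟨l₁', hwalk₁', hlen₁⟩ :=
      hwalk₁.exists_length_le_ncard hfinite (by simpa [hx] using hlev₁)
    obtain ⟨l₂, hwalk₂, hlen₂⟩ := ih y (by omega)
    have hmono : {z | level z ≤ n + 2}.ncard ≤ {z | level z ≤ n + 3}.ncard :=
      Set.ncard_le_ncard (fun z (hz : level z ≤ n + 2) => show level z ≤ n + 3 by omega) hfinite
    refine ⟨l₁' ++ l₂, hwalk₁'.append hwalk₂, ?_⟩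
    calc (l₁' ++ l₂).length = l₁'.length + l₂.length := List.length_append
      _ ≤ {z | level z ≤ n + 3}.ncard + n * {z | level z ≤ n + 3}.ncard :=
          add_le_add hlen₁ (hlen₂.trans (Nat.mul_le_mul_left n hmono))
      _ = (n + 1) * {z | level z ≤ n + 1 + 2}.ncard := by ring

end Levels

theorem natCast_mul_log_le_of_le {j m : ℕ} (h : j ≤ m) : (j : ℝ) * log j ≤ m * log m := by
  rcases j.eq_zero_or_pos with rfl | hj
  · simpa using mul_nonneg m.cast_nonneg (Real.log_natCast_nonneg m)
  · have hj' : (0 : ℝ) < j := by exact_mod_cast hj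
    have hjm : (j : ℝ) ≤ m := by exact_mod_cast h
    exact mul_le_mul hjm (log_le_log hj' hjm) (Real.log_natCast_nonneg j) (by positivity)

theorem exists_le_mul_exp_of_eventually_le {a : ℕ → ℕ} {C : ℝ} (hC : 0 ≤ C) {N : ℕ}
    (ha : ∀ k, N ≤ k → (a k : ℝ) ≤ exp (C * k * log k)) :
    ∃ M : ℝ, 1 ≤ M ∧ ∀ j m : ℕ, j ≤ m → (a j : ℝ) ≤ M * exp (C * m * log m) := by
  refine ⟨(range N).sup a + 1, by simp, fun j m hjm => ?_⟩
  have hexp : 1 ≤ exp (C * m * log m) := by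
    rw [mul_assoc]
    exact one_le_exp (mul_nonneg hC (mul_nonneg m.cast_nonneg (log_natCast_nonneg m)))
  rcases lt_or_ge j N with hjN | hNj
  · have : (a j : ℝ) ≤ (range N).sup a := by exact_mod_cast le_sup (mem_range.2 hjN)
    nlinarith
  · calc (a j : ℝ) ≤ exp (C * j * log j) := ha j hNj
      _ ≤ exp (C * m * log m) := by
        simpa [mul_assoc] using mul_le_mul_of_nonneg_left (natCast_mul_log_le_of_le hjm) hC
      _ ≤ _ := le_mul_of_one_le_left (exp_pos _).le (by simp)

theorem add_two_mul_log_add_two_le {n : ℕ} (hn : 2 ≤ n) :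
    ((n : ℝ) + 2) * log (n + 2) ≤ 4 * (n * log n) := by
  have hn' : (2 : ℝ) ≤ n := by exact_mod_cast hn
  have hlog : log ((n : ℝ) + 2) ≤ 2 * log n := by
    calc log ((n : ℝ) + 2) ≤ log ((n : ℝ) ^ 2) := log_le_log (by positivity) (by nlinarith)
      _ = 2 * log n := by rw [log_pow]; norm_num
  nlinarith [log_nonneg (by linarith : (1 : ℝ) ≤ n + 2), log_nonneg (by linarith : (1 : ℝ) ≤ n)]

theorem pow_four_le_exp_mul_log {n : ℕ} (hn : 1 ≤ n) : (n : ℝ) ^ 4 ≤ exp (4 * (n * log n)) := by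
  have hn' : (1 : ℝ) ≤ n := by exact_mod_cast hn
  rw [← exp_log (by positivity : (0 : ℝ) < n ^ 4), log_pow, exp_le_exp]
  push_cast
  nlinarith [log_nonneg hn']

theorem mul_mul_exp_le_exp {n : ℕ} {M C : ℝ} (hC : 0 ≤ C) (hn : 3 ≤ n) (hM : M ≤ n)
    (hM1 : 0 ≤ M) :
    n * ((n + 3) * (M * exp (C * (n + 2) * log (n + 2)))) ≤ exp ((4 * C + 4) * n * log n) := by
  have hn' : (3 : ℝ) ≤ n := by exact_mod_cast hn
  have hpoly : (n : ℝ) * ((n + 3) * M) ≤ n ^ 4 := by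
    have h3 : (n + 3) * M ≤ 2 * n * n := mul_le_mul (by linarith) hM hM1 (by positivity)
    calc (n : ℝ) * ((n + 3) * M) ≤ n * (2 * n * n) := mul_le_mul_of_nonneg_left h3 (by positivity)
      _ ≤ n * (n * n * n) := by gcongr; linarith
      _ = n ^ 4 := by ring
  have hexp : C * (n + 2) * log (n + 2) ≤ C * (4 * (n * log n)) := by
    rw [mul_assoc]; exact mul_le_mul_of_nonneg_left (add_two_mul_log_add_two_le (by omega)) hC
  calc (n : ℝ) * ((n + 3) * (M * exp (C * (n + 2) * log (n + 2))))
      = n * ((n + 3) * M) * exp (C * (n + 2) * log (n + 2)) := by ring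
    _ ≤ exp (4 * (n * log n)) * exp (C * (4 * (n * log n))) :=
        mul_le_mul ((hpoly.trans (pow_four_le_exp_mul_log (by omega)))) (exp_le_exp.2 hexp)
          (exp_pos _).le (exp_pos _).le
    _ = exp ((4 * C + 4) * n * log n) := by rw [← exp_add]; ring_nf

theorem exists_mul_sum_le_exp {a : ℕ → ℕ} {C : ℝ} (hC : 0 ≤ C) {N : ℕ}
    (ha : ∀ k, N ≤ k → (a k : ℝ) ≤ exp (C * k * log k)) :
    ∃ C' : ℝ, 0 < C' ∧ ∃ N' : ℕ, ∀ n, N' ≤ n →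
      (n : ℝ) * ∑ j ∈ range (n + 3), (a j : ℝ) ≤ exp (C' * n * log n) := by
  obtain ⟨M, hM, hle⟩ := exists_le_mul_exp_of_eventually_le hC ha
  refine ⟨4 * C + 4, by linarith, max 3 ⌈M⌉₊, fun n hn => ?_⟩
  have hsum : ∑ j ∈ range (n + 3), (a j : ℝ) ≤
      (n + 3) * (M * exp (C * (n + 2) * log (n + 2))) := by
    have := sum_le_card_nsmul (range (n + 3)) (fun j => (a j : ℝ)) _
      fun j hj => hle j (n + 2) (by simpa [Nat.lt_succ_iff] using hj)
    simpa using this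
  calc (n : ℝ) * ∑ j ∈ range (n + 3), (a j : ℝ)
      ≤ n * ((n + 3) * (M * exp (C * (n + 2) * log (n + 2)))) :=
        mul_le_mul_of_nonneg_left hsum n.cast_nonneg
    _ ≤ exp ((4 * C + 4) * n * log n) :=
        mul_mul_exp_le_exp hC (le_of_max_le_left hn)
          ((Nat.le_ceil M).trans (by exact_mod_cast le_of_max_le_right hn)) (by linarith)

theorem stmt18_general (T : Type*) (level : T → ℕ) (adj : T → T → Prop)
    (hfin : ∀ k : ℕ, Finite {x : T // level x = k})
    (hcount : ∃ C : ℝ, 0 < C ∧ ∃ N : ℕ, ∀ k : ℕ, N ≤ k →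
      (Nat.card {x : T // level x = k} : ℝ) ≤ Real.exp (C * k * Real.log k))
    (c : T)
    (hsimp : ∀ x : T, 3 ≤ level x → ∃ l : List T, ∃ h : l ≠ [],
      List.Chain adj x l ∧ (∀ z ∈ l, level z ≤ level x + 2) ∧
      level (l.getLast h) = level x - 1)
    (h2 : ∀ y : T, level y = 2 → ∃ l : List T, ∃ h : l ≠ [],
      List.Chain adj y l ∧ (∀ z ∈ l, level z ≤ 4) ∧ l.getLast h = c) :
    ∃ C' : ℝ, 0 < C' ∧ ∃ N : ℕ, ∀ x : T, N ≤ level x →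
      ∃ l : List T, ∃ h : l ≠ [],
        List.Chain adj x l ∧ l.getLast h = c ∧
        (l.length : ℝ) ≤ Real.exp (C' * level x * Real.log (level x)) := by
  obtain ⟨C, hC, N, hN⟩ := hcount
  obtain ⟨C', hC', N', hN'⟩ := exists_mul_sum_le_exp hC.le hN
  have hsimp' : ∀ x, 3 ≤ level x → ∃ l y, IsWalk adj x l y ∧
      (∀ z ∈ l, level z ≤ level x + 2) ∧ level y = level x - 1 := fun x hx => by
    obtain ⟨l, hne, hch, hlev, hlast⟩ := hsimp x hx
    exact ⟨l, _, isWalk_iff.2 ⟨hne, hch, rfl⟩, hlev, hlast⟩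
  have h2' : ∀ y, level y = 2 → ∃ l, IsWalk adj y l c ∧ ∀ z ∈ l, level z ≤ 4 := fun y hy => by
    obtain ⟨l, hne, hch, hlev, hlast⟩ := h2 y hy
    exact ⟨l, isWalk_iff.2 ⟨hne, hch, hlast⟩, hlev⟩
  refine ⟨C', hC', max N' 2, fun x hx => ?_⟩
  obtain ⟨l, hwalk, hlen⟩ :=
    exists_isWalk_length_le level hfin hsimp' h2' _ (le_of_max_le_right hx) x rfl
  obtain ⟨hne, hch, hlast⟩ := isWalk_iff.1 hwalk
  refine ⟨l, hne, hch, hlast, ?_⟩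
  calc (l.length : ℝ)
      ≤ level x * ∑ j ∈ range (level x + 3), (Nat.card {z : T // level z = j} : ℝ) := by
        exact_mod_cast hlen.trans (Nat.mul_le_mul_left _ (ncard_setOf_level_le_le_sum level _))
    _ ≤ _ := hN' _ (le_of_max_le_left hx)

/-- Conditional complexity statement: if every one-vertex 3-sphere
triangulation at level n ≥ 3 of the restricted Pachner graph admits a
simplification path (to level n-1) of excess height ≤ 2, level sets of the
graph are finite of size exp(O(k log k)), and every level-2 node can be brought
to the canonical node c within levels ≤ 4, then any node can be transformed
into c using exp(O(n log n)) Pachner moves. -/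
theorem stmt18 (T : Type*) (level : T → ℕ) (adj : T → T → Prop)
    (hfin : ∀ k : ℕ, Finite {x : T // level x = k})
    (hcount : ∃ C : ℝ, 0 < C ∧ ∃ N : ℕ, ∀ k : ℕ, N ≤ k →
      (Nat.card {x : T // level x = k} : ℝ) ≤ Real.exp (C * k * Real.log k))
    (c : T) (hc : level c = 2)
    (hsimp : ∀ x : T, 3 ≤ level x → ∃ l : List T, ∃ h : l ≠ [],
      List.Chain adj x l ∧ (∀ z ∈ l, level z ≤ level x + 2) ∧
      level (l.getLast h) = level x - 1)
    (h2 : ∀ y : T, level y = 2 → ∃ l : List T, ∃ h : l ≠ [],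
      List.Chain adj y l ∧ (∀ z ∈ l, level z ≤ 4) ∧ l.getLast h = c) :
    ∃ C' : ℝ, 0 < C' ∧ ∃ N : ℕ, ∀ x : T, N ≤ level x →
      ∃ l : List T, ∃ h : l ≠ [],
        List.Chain adj x l ∧ l.getLast h = c ∧
        (l.length : ℝ) ≤ Real.exp (C' * level x * Real.log (level x)) :=
  stmt18_general T level adj hfin hcount c hsimp h2
end
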